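/- There exists d₀ such that for every integer d ≥ d₀ the following holds with r₀ = 2^d: there exist a real number r with 0 < r ≤ r₀ and a positive integer t ≤ 4r² such that the number of unordered pairs {p, q} of distinct lattice points p, q ∈ ℤ^d lying on the origin-centered sphere of radius r with squared distance ‖p − q‖² = t is at least V(B_d(r₀ − √d/2))² / (8·r₀⁶), where V(B_d(ρ)) denotes the d-dimensional Lebesgue volume of the closed ball of radius ρ in ℝ^d. -/

import Mathlib

/-!
Put `K = r₀² = 4 ^ d`. The unit cubes centred at the lattice points `x` with `‖x‖² ≤ K` cover
the ball of radius `r₀ - √d / 2`, since rounding moves a point by at most `√d / 2`; so there are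
`N ≥ V` such points, spread over the `K + 1` spheres `‖x‖² = s`, `s ≤ K`. By Cauchy–Schwarz these
spheres carry at least `(N² / (K + 1) - N) / 2` unordered pairs of distinct points, and a pair on
the sphere `‖x‖² = s` has squared distance `t ∈ [1, 4 s]`. Pigeonholing over the `2 K (K + 1)`
classes `(s, t)` gives one class with at least `(N² - (K + 1) N) / (4 K (K + 1)²)` pairs, which
is at least `V² / (8 K³)` because `V ≥ 8 ^ d ≥ 8 K` (a cube of side `8` fits in the ball).
-/

open MeasureTheory Finset

theorem EuclideanSpace.norm_le_sqrt_card_mul {ι : Type*} [Fintype ι] {x : EuclideanSpace ℝ ι}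
    {a : ℝ} (ha : 0 ≤ a) (hx : ∀ i, |x i| ≤ a) : ‖x‖ ≤ √(Fintype.card ι) * a := by
  rw [EuclideanSpace.norm_eq, ← Real.sqrt_sq ha, ← Real.sqrt_mul (Nat.cast_nonneg _)]
  gcongr
  calc ∑ i, ‖x i‖ ^ 2 ≤ ∑ _i : ι, a ^ 2 := by
        gcongr with i
        exact hx i
    _ = _ := by simp

theorem EuclideanSpace.volume_preimage_ofLp_pi_Icc {ι : Type*} [Fintype ι] (l u : ι → ℝ) :
    volume (WithLp.ofLp ⁻¹' Set.univ.pi fun i => Set.Icc (l i) (u i) :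
      Set (EuclideanSpace ℝ ι)) = ∏ i, ENNReal.ofReal (u i - l i) := by
  rw [(PiLp.volume_preserving_ofLp ι).measure_preimage
    (MeasurableSet.univ_pi fun _ => measurableSet_Icc).nullMeasurableSet, volume_pi_pi]
  simp only [Real.volume_Icc]

theorem pow_le_volume_closedBall (d : ℕ) {a ρ : ℝ} (ha : 0 ≤ a) (hρ : √d * a ≤ ρ) :
    (2 * a) ^ d ≤ (volume (Metric.closedBall (0 : EuclideanSpace ℝ (Fin d)) ρ)).toReal := by
  let cube : Set (EuclideanSpace ℝ (Fin d)) :=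
    WithLp.ofLp ⁻¹' Set.univ.pi fun _ => Set.Icc (-a) a
  have hvol : volume cube = ENNReal.ofReal ((2 * a) ^ d) := by
    rw [EuclideanSpace.volume_preimage_ofLp_pi_Icc, prod_const, card_univ, Fintype.card_fin,
      show a - -a = 2 * a by ring, ENNReal.ofReal_pow (by positivity)]
  have hsub : cube ⊆ Metric.closedBall 0 ρ := fun y hy => by
    rw [mem_closedBall_zero_iff]
    refine (EuclideanSpace.norm_le_sqrt_card_mul ha fun i => abs_le.mpr (hy i trivial)).trans ?_
    simpa using hρ
  rw [← ENNReal.toReal_ofReal (by positivity : 0 ≤ (2 * a) ^ d), ← hvol]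
  exact ENNReal.toReal_mono measure_closedBall_lt_top.ne (measure_mono hsub)

noncomputable def latticeSphere (d s : ℕ) : Finset (Fin d → ℤ) :=
  {x ∈ Fintype.piFinset fun _ => Icc (-(s : ℤ)) s | ∑ i, x i ^ 2 = s}

theorem mem_latticeSphere {d s : ℕ} {x : Fin d → ℤ} :
    x ∈ latticeSphere d s ↔ ∑ i, x i ^ 2 = s := by
  refine ⟨fun h => (mem_filter.mp h).2,
    fun h => mem_filter.mpr ⟨Fintype.mem_piFinset.mpr fun i => ?_, h⟩⟩
  have : x i ^ 2 ≤ s := h ▸ single_le_sum (fun j _ => sq_nonneg (x j)) (mem_univ i)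
  rw [mem_Icc]
  constructor <;> nlinarith [Int.le_self_sq (x i), Int.le_self_sq (-x i)]

noncomputable def latticeBall (d K : ℕ) : Finset (Fin d → ℤ) :=
  (range (K + 1)).biUnion (latticeSphere d)

theorem mem_latticeBall {d K : ℕ} {x : Fin d → ℤ} :
    x ∈ latticeBall d K ↔ ∑ i, x i ^ 2 ≤ K := by
  simp only [latticeBall, mem_biUnion, mem_range, mem_latticeSphere]
  constructor
  · rintro ⟨s, hs, h⟩
    omega
  · intro h
    have : 0 ≤ ∑ i, x i ^ 2 := sum_nonneg fun i _ => sq_nonneg (x i)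
    exact ⟨(∑ i, x i ^ 2).toNat, by omega, by omega⟩

theorem card_latticeBall (d K : ℕ) :
    #(latticeBall d K) = ∑ s ∈ range (K + 1), #(latticeSphere d s) :=
  card_biUnion fun s _ s' _ h => disjoint_left.mpr fun x hx hx' => h <| by
    rw [mem_latticeSphere] at hx hx'
    omega

theorem volume_closedBall_le_card_latticeBall (d K : ℕ) {ρ : ℝ}
    (hρ : (ρ + √d / 2) ^ 2 ≤ K) :
    (volume (Metric.closedBall (0 : EuclideanSpace ℝ (Fin d)) ρ)).toReal ≤
      #(latticeBall d K) := by
  let cube (x : Fin d → ℤ) : Set (EuclideanSpace ℝ (Fin d)) :=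
    WithLp.ofLp ⁻¹' Set.univ.pi fun i => Set.Icc ((x i : ℝ) - 1 / 2) (x i + 1 / 2)
  have hvol (x : Fin d → ℤ) : volume (cube x) = 1 := by
    rw [EuclideanSpace.volume_preimage_ofLp_pi_Icc]
    norm_num
  have hcover : Metric.closedBall 0 ρ ⊆ ⋃ x ∈ latticeBall d K, cube x := by
    intro y hy
    let x : Fin d → ℤ := fun i => round (y i)
    let xR : EuclideanSpace ℝ (Fin d) := WithLp.toLp 2 fun i => (x i : ℝ)
    have hround : ‖y - xR‖ ≤ √d * (1 / 2) := by
      simpa using EuclideanSpace.norm_le_sqrt_card_mul (x := y - xR) (by norm_num)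
        fun i => by simpa [x, xR] using abs_sub_round (y i)
    have hxR : ‖xR‖ ≤ ρ + √d / 2 := by
      have := norm_le_norm_add_norm_sub' xR y
      rw [mem_closedBall_zero_iff] at hy
      rw [norm_sub_rev] at this
      linarith
    refine Set.mem_biUnion (x := x) (mem_latticeBall.mpr ?_) fun i _ => ?_
    · have : (∑ i, (x i : ℝ) ^ 2) ≤ K := calc
        _ = ‖xR‖ ^ 2 := (EuclideanSpace.real_norm_sq_eq _).symm
        _ ≤ K := (pow_le_pow_left₀ (norm_nonneg _) hxR 2).trans hρ
      exact_mod_cast this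
    · have := abs_le.mp (abs_sub_round (y i))
      exact ⟨by linarith, by linarith⟩
  calc (volume (Metric.closedBall (0 : EuclideanSpace ℝ (Fin d)) ρ)).toReal
      ≤ (∑ x ∈ latticeBall d K, volume (cube x)).toReal :=
        ENNReal.toReal_mono (by simp [hvol])
          ((measure_mono hcover).trans (measure_biUnion_finset_le _ _))
    _ = #(latticeBall d K) := by simp [hvol]

section SquaredDistance

variable {ι R : Type*} [Fintype ι] [CommRing R] [LinearOrder R] [IsStrictOrderedRing R]

theorem sum_sub_sq_le (p q : ι → R) :
    ∑ i, (p i - q i) ^ 2 ≤ 2 * (∑ i, p i ^ 2 + ∑ i, q i ^ 2) := by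
  rw [← sum_add_distrib, mul_sum]
  gcongr with i
  nlinarith [sq_nonneg (p i + q i)]

theorem sum_sub_sq_pos {p q : ι → R} (hpq : p ≠ q) : 0 < ∑ i, (p i - q i) ^ 2 := by
  obtain ⟨i, hi⟩ := Function.ne_iff.mp hpq
  have : p i - q i ≠ 0 := sub_ne_zero.mpr hi
  exact sum_pos' (fun j _ => sq_nonneg _) ⟨i, mem_univ i, by positivity⟩

end SquaredDistance

noncomputable def spherePairs (d s t : ℕ) : Finset (Finset (Fin d → ℤ)) :=
  {pq ∈ latticeSphere d s ×ˢ latticeSphere d s |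
    pq.1 ≠ pq.2 ∧ ∑ i, (pq.1 i - pq.2 i) ^ 2 = (t : ℤ)}.image fun pq => {pq.1, pq.2}

theorem coe_spherePairs (d s t : ℕ) :
    (spherePairs d s t : Set (Finset (Fin d → ℤ))) =
      {e | ∃ p q : Fin d → ℤ, p ≠ q ∧ e = {p, q} ∧ ∑ i, p i ^ 2 = s ∧ ∑ i, q i ^ 2 = s ∧
        ∑ i, (p i - q i) ^ 2 = t} := by
  ext e
  simp only [spherePairs, coe_image, coe_filter, mem_product, mem_latticeSphere, Set.mem_image,
    Set.mem_ofPred_eq, Prod.exists]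
  constructor
  · rintro ⟨p, q, ⟨⟨hp, hq⟩, hpq, ht⟩, rfl⟩
    exact ⟨p, q, hpq, rfl, hp, hq, ht⟩
  · rintro ⟨p, q, hpq, rfl, hp, hq, ht⟩
    exact ⟨p, q, ⟨⟨hp, hq⟩, hpq, ht⟩, rfl⟩

theorem choose_two_card_latticeSphere_le (d s : ℕ) :
    (#(latticeSphere d s)).choose 2 ≤ ∑ t ∈ Icc 1 (4 * s), #(spherePairs d s t) := by
  rw [← card_powersetCard]
  refine (card_le_card fun e he => ?_).trans card_biUnion_le
  obtain ⟨hsub, hcard⟩ := mem_powersetCard.mp he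
  obtain ⟨p, q, hpq, rfl⟩ := card_eq_two.mp hcard
  have hp : p ∈ latticeSphere d s := hsub (mem_insert_self p {q})
  have hq : q ∈ latticeSphere d s := hsub (mem_insert_of_mem (mem_singleton_self q))
  have hpos := sum_sub_sq_pos hpq
  have hle := sum_sub_sq_le p q
  rw [mem_latticeSphere.mp hp, mem_latticeSphere.mp hq] at hle
  refine mem_biUnion.mpr ⟨(∑ i, (p i - q i) ^ 2).toNat, mem_Icc.mpr ⟨by omega, by omega⟩, ?_⟩
  exact mem_image.mpr ⟨(p, q),
    mem_filter.mpr ⟨mem_product.mpr ⟨hp, hq⟩, hpq, (Int.toNat_of_nonneg hpos.le).symm⟩, rfl⟩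

theorem exists_spherePairs_sum_choose_two_le (d : ℕ) {K : ℕ} (hK : 1 ≤ K) :
    ∃ s ≤ K, ∃ t, 0 < t ∧ t ≤ 4 * s ∧
      ∑ u ∈ range (K + 1), (#(latticeSphere d u)).choose 2 ≤
        2 * K * (K + 1) * #(spherePairs d s t) := by
  let I := (range (K + 1)).sigma fun s => Icc 1 (4 * s)
  have hI : #I = 2 * K * (K + 1) := by
    have := sum_range_id_mul_two (K + 1)
    simp only [I, card_sigma, Nat.card_Icc, Nat.add_sub_cancel]
    rw [← mul_sum, Nat.add_sub_cancel] at *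
    linarith
  set total := ∑ u ∈ range (K + 1), (#(latticeSphere d u)).choose 2
  have htotal : total ≤ ∑ x ∈ I, #(spherePairs d x.1 x.2) := by
    rw [sum_sigma]
    exact sum_le_sum fun u _ => choose_two_card_latticeSphere_le d u
  have hne : I.Nonempty := ⟨⟨1, 1⟩, by simp [I]; omega⟩
  obtain ⟨⟨s, t⟩, hst, hmax⟩ := exists_le_of_sum_le hne (f := fun _ => total)
    (g := fun x => #I * #(spherePairs d x.1 x.2)) (by
      rw [sum_const, smul_eq_mul, ← mul_sum]
      exact Nat.mul_le_mul_left _ htotal)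
  simp only [I, mem_sigma, mem_range, mem_Icc] at hst
  exact ⟨s, by omega, t, by omega, hst.2.2, hI ▸ hmax⟩

theorem sq_sub_card_mul_le_sum_choose_two {ι : Type*} (s : Finset ι) (f : ι → ℕ) :
    ((∑ i ∈ s, f i : ℕ) : ℝ) ^ 2 - #s * ∑ i ∈ s, f i ≤
      2 * #s * ∑ i ∈ s, ((f i).choose 2 : ℝ) := by
  have hcs := sq_sum_le_card_mul_sum_sq (s := s) (f := fun i => (f i : ℝ))
  have h2 : 2 * ∑ i ∈ s, ((f i).choose 2 : ℝ) =
      ∑ i ∈ s, (f i : ℝ) ^ 2 - ∑ i ∈ s, (f i : ℝ) := by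
    simp only [Nat.cast_choose_two, mul_sum, ← sum_sub_distrib]
    exact sum_congr rfl fun i _ => by ring
  push_cast
  nlinarith

theorem exists_spherePairs_card_ge (d : ℕ) {K : ℕ} (hK : 1 ≤ K) :
    ∃ s ≤ K, ∃ t, 0 < t ∧ t ≤ 4 * s ∧
      (#(latticeBall d K) : ℝ) ^ 2 - (K + 1) * #(latticeBall d K) ≤
        4 * K * (K + 1) ^ 2 * #(spherePairs d s t) := by
  obtain ⟨s, hs, t, ht, hts, hcount⟩ := exists_spherePairs_sum_choose_two_le d hK
  refine ⟨s, hs, t, ht, hts, ?_⟩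
  have hcs := sq_sub_card_mul_le_sum_choose_two (range (K + 1)) fun u => #(latticeSphere d u)
  have hcount' : (∑ u ∈ range (K + 1), ((#(latticeSphere d u)).choose 2 : ℝ)) ≤
      2 * K * (K + 1) * #(spherePairs d s t) := by exact_mod_cast hcount
  rw [card_latticeBall]
  simp only [card_range, Nat.cast_add, Nat.cast_one] at hcs
  nlinarith

theorem div_le_of_sq_sub_le {K V N E : ℝ} (hK : 4 ≤ K) (hV : 8 * K ≤ V) (hN : V ≤ N)
    (h : N ^ 2 - (K + 1) * N ≤ 4 * K * (K + 1) ^ 2 * E) : V ^ 2 / (8 * K ^ 3) ≤ E := by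
  have hmono : V ^ 2 - (K + 1) * V ≤ N ^ 2 - (K + 1) * N := by nlinarith
  have hV' : 0 ≤ (K ^ 2 - 2 * K - 1) * V - 2 * K ^ 2 * (K + 1) := by
    nlinarith [mul_le_mul_of_nonneg_left hV (by nlinarith : 0 ≤ K ^ 2 - 2 * K - 1)]
  have hV'' : (K + 1) ^ 2 * V ^ 2 ≤ 2 * K ^ 2 * (V ^ 2 - (K + 1) * V) := by
    nlinarith [mul_nonneg (by linarith : 0 ≤ V) hV']
  rw [div_le_iff₀ (by positivity)]
  nlinarith

theorem nine_mul_sqrt_le_two_mul_two_pow {d : ℕ} (hd : 5 ≤ d) : 9 * √d ≤ 2 * 2 ^ d := by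
  have hnat : 9 * d ≤ 2 ^ (d + 1) := by
    induction d, hd using Nat.le_induction with
    | base => norm_num
    | succ n hn ih =>
      have : 2 ^ 6 ≤ 2 ^ (n + 1) := Nat.pow_le_pow_right (by norm_num) (by omega)
      rw [pow_succ]
      omega
  calc 9 * √d ≤ 9 * d := by
        gcongr
        exact Real.sqrt_le_self_iff.mpr (Or.inr (by exact_mod_cast (by omega : 1 ≤ d)))
    _ ≤ 2 * 2 ^ d := by
        rw [← pow_succ']
        exact_mod_cast hnat

theorem eight_mul_four_pow_le_volume_closedBall {d : ℕ} (hd : 5 ≤ d) :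
    8 * (4 : ℝ) ^ d ≤
      (volume (Metric.closedBall (0 : EuclideanSpace ℝ (Fin d)) (2 ^ d - √d / 2))).toReal := by
  have hsqrt := nine_mul_sqrt_le_two_mul_two_pow hd
  refine le_trans ?_ (pow_le_volume_closedBall d (a := 4) (by norm_num) (by linarith))
  rw [mul_pow]
  gcongr
  exact_mod_cast (Nat.pow_le_pow_right (by norm_num) (by omega) : 2 ^ 3 ≤ 2 ^ d)

/-- For all sufficiently large `d`, with `r₀ = 2^d` there are a radius `r` with `0 < r ≤ r₀`
and a positive integer `t ≤ 4r²` such that at least `V(B_d(r₀ - √d/2))² / (8 r₀⁶)` unordered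
pairs of distinct lattice points on the origin-centered sphere of radius `r` in `ℝ^d` have
squared distance exactly `t`. -/
theorem many_pairs_same_distance_on_sphere :
    ∃ d₀ : ℕ, ∀ d : ℕ, d₀ ≤ d →
      ∃ r : ℝ, 0 < r ∧ r ≤ (2 : ℝ) ^ d ∧
        ∃ t : ℕ, 0 < t ∧ (t : ℝ) ≤ 4 * r ^ 2 ∧
          ((Set.ncard {e : Finset (Fin d → ℤ) |
              ∃ p q : Fin d → ℤ, p ≠ q ∧ e = {p, q} ∧
                (∑ i, ((p i : ℝ)) ^ 2 = r ^ 2) ∧ (∑ i, ((q i : ℝ)) ^ 2 = r ^ 2) ∧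
                ∑ i, (p i - q i) ^ 2 = (t : ℤ)} : ℝ)) ≥
            (volume (Metric.closedBall (0 : EuclideanSpace ℝ (Fin d))
                ((2 : ℝ) ^ d - Real.sqrt d / 2))).toReal ^ 2 /
              (8 * ((2 : ℝ) ^ d) ^ 6) := by
  refine ⟨5, fun d hd => ?_⟩
  have hK : ((4 ^ d : ℕ) : ℝ) = ((2 : ℝ) ^ d) ^ 2 := by
    rw [← pow_mul, mul_comm, pow_mul]
    norm_num
  obtain ⟨s, hsK, t, ht, hts, hcount⟩ :=
    exists_spherePairs_card_ge d (Nat.one_le_pow d 4 (by norm_num))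
  have hs : (0 : ℝ) < s := by exact_mod_cast (by omega : 0 < s)
  have hr : √(s : ℝ) ^ 2 = s := Real.sq_sqrt hs.le
  refine ⟨√s, Real.sqrt_pos.mpr hs, ?_, t, ht, ?_, ?_⟩
  · rw [Real.sqrt_le_left (by positivity), ← hK]
    exact_mod_cast hsK
  · rw [hr]
    exact_mod_cast hts
  have hset : {e : Finset (Fin d → ℤ) | ∃ p q : Fin d → ℤ, p ≠ q ∧ e = {p, q} ∧
      (∑ i, ((p i : ℝ)) ^ 2 = √s ^ 2) ∧ (∑ i, ((q i : ℝ)) ^ 2 = √s ^ 2) ∧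
      ∑ i, (p i - q i) ^ 2 = (t : ℤ)} = spherePairs d s t := by
    rw [coe_spherePairs, hr]
    norm_cast
  have hball := volume_closedBall_le_card_latticeBall d (4 ^ d) (ρ := 2 ^ d - √d / 2)
    (by rw [hK]; ring_nf; rfl)
  rw [hset, Set.ncard_coe_finset, show ((2 : ℝ) ^ d) ^ 6 = ((4 ^ d : ℕ) : ℝ) ^ 3 by rw [hK]; ring]
  exact div_le_of_sq_sub_le (by exact_mod_cast Nat.le_self_pow (by omega) 4)
    (by exact_mod_cast eight_mul_four_pow_le_volume_closedBall hd) hball hcount
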